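/- arXiv:2203.05301 — 5 statements merged into one kernel-verified Lean document; each statement's English description precedes it below -/
import Mathlib

section
/- Assume 0 < δ < 1 − 1/q. Let C ⊆ F^n be a balanced code and set k = log_q|C|. Then the number of codewords of C of Hamming weight at most δn satisfies |{c ∈ C : w(c) ≤ δn}| ≤ q^{k·h_q(δ)}. -/
/-- A code `C ⊆ F^n` is *balanced* if there exist subsets `I₁, …, I_m` of the index set
(repetitions allowed) and a positive integer `t` such that (1) for each `j` the projection
onto the coordinates in `I_j` maps `C` bijectively onto `F^{I_j}`, and (2) every index `i`
lies in exactly `t` of the sets `I₁, …, I_m`. -/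
def IsBalancedCode {F : Type*} {n : ℕ} (C : Set (Fin n → F)) : Prop :=
  ∃ (m : ℕ) (Is : Fin m → Finset (Fin n)) (t : ℕ), 0 < t ∧
    (∀ j, Set.BijOn (fun a : Fin n → F => fun i : {x : Fin n // x ∈ Is j} => a i.1)
      C Set.univ) ∧
    (∀ i : Fin n, (Finset.univ.filter fun j => i ∈ Is j).card = t)

/-- The `q`-ary entropy function `h_q`. -/
noncomputable def entropy (q : ℕ) (x : ℝ) : ℝ :=
  x * Real.logb q (q - 1) - x * Real.logb q x - (1 - x) * Real.logb q (1 - x)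

/-! For `0 < μ ≤ 1`, every codeword of weight at most `δn` contributes at least `μ^{δk}` to
`∑_{c ∈ C} μ^{t·w(c)/m}`, because `mk = tn`. Since `∑_j w(ρ_{I_j} c) = t·w(c)`, convexity of
`x ↦ μ^x` bounds this sum by the average over `j` of `∑_{c ∈ C} μ^{w(ρ_{I_j} c)}`, and as `ρ_{I_j}`
is a bijection `C → F^{I_j}` each of these sums equals `∑_{x ∈ F^k} μ^{w(x)} = (1 + (q-1)μ)^k`.
The choice `μ = δ / ((1-δ)(q-1))`, which is at most `1` exactly when `δ ≤ 1 - 1/q`, turns the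
resulting bound `(1 + (q-1)μ)^k / μ^{δk}` into `q^{k h_q(δ)}`. -/

open Finset Real

section
variable {ι κ F : Type*} [Fintype κ] [DecidableEq ι] {Is : κ → Finset ι} {t : ℕ}

theorem sum_card_inter_eq_card_mul (hcount : ∀ i, #{j | i ∈ Is j} = t) (s : Finset ι) :
    ∑ j, #(s ∩ Is j) = #s * t := by
  simp_rw [← filter_mem_eq_inter, card_filter]
  rw [sum_comm]
  simp_rw [← card_filter, hcount, sum_const, smul_eq_mul]

theorem card_mul_eq_mul_card [Fintype ι] (hcount : ∀ i, #{j | i ∈ Is j} = t) {k : ℕ}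
    (hk : ∀ j, #(Is j) = k) : Fintype.card κ * k = t * Fintype.card ι := by
  have := sum_card_inter_eq_card_mul hcount univ
  simp_rw [univ_inter, hk, sum_const, smul_eq_mul, card_univ] at this
  rw [this, mul_comm]

omit [DecidableEq ι] in
theorem hammingNorm_restrict [Zero F] [DecidableEq F] (s : Finset ι) (x : ι → F) :
    hammingNorm (s.restrict x) = #{i ∈ s | x i ≠ 0} := by
  rw [hammingNorm, ← card_map (Function.Embedding.subtype _)]
  congr 1
  ext i
  simp only [mem_map, mem_filter, mem_univ, true_and, Function.Embedding.subtype_apply]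
  exact ⟨fun ⟨j, hj, hji⟩ => hji ▸ ⟨j.2, hj⟩, fun ⟨hi, hx⟩ => ⟨⟨i, hi⟩, hx, rfl⟩⟩

theorem sum_hammingNorm_restrict [Fintype ι] [Zero F] [DecidableEq F]
    (hcount : ∀ i, #{j | i ∈ Is j} = t) (x : ι → F) :
    ∑ j, hammingNorm ((Is j).restrict x) = t * hammingNorm x := by
  have hfilter (j : κ) : {i ∈ Is j | x i ≠ 0} = ({i | x i ≠ 0} : Finset ι) ∩ Is j := by
    ext i
    simp only [mem_filter, mem_inter, mem_univ, true_and, and_comm]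
  simp_rw [hammingNorm_restrict, hfilter, sum_card_inter_eq_card_mul hcount, mul_comm]
  rfl

theorem card_eq_pow_of_bijOn_restrict [Fintype F] {C : Finset (ι → F)} {s : Finset ι}
    (h : Set.BijOn s.restrict (C : Set (ι → F)) Set.univ) : #C = Fintype.card F ^ #s := by
  rw [card_nbij _ (fun _ _ => mem_univ _) h.injOn (by simpa using h.surjOn), card_univ,
    Fintype.card_fun, Fintype.card_coe]

theorem sum_pow_hammingNorm [Fintype ι] [Fintype F] [DecidableEq F] [Zero F] (μ : ℝ) :
    ∑ x : ι → F, μ ^ hammingNorm x = (1 + (Fintype.card F - 1) * μ) ^ Fintype.card ι := by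
  have hprod (x : ι → F) : μ ^ hammingNorm x = ∏ i, if x i ≠ 0 then μ else 1 := by
    rw [prod_ite, prod_const, prod_const, one_pow, mul_one, hammingNorm]
  have hsum : ∑ a : F, (if a ≠ 0 then μ else 1) = 1 + (Fintype.card F - 1) * μ := by
    rw [sum_ite, sum_const, sum_const, filter_ne', card_erase_of_mem (mem_univ _), card_univ]
    simp only [not_not, filter_eq', if_pos (mem_univ _), card_singleton, nsmul_eq_mul,
      Nat.cast_pred Fintype.card_pos]
    ring
  simp_rw [hprod, ← Fintype.prod_sum (fun (_ : ι) (a : F) => if a ≠ 0 then μ else 1), hsum,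
    prod_const, card_univ]

theorem rpow_sum_div_card_le [Nonempty κ] {μ : ℝ} (hμ : 0 < μ) (a : κ → ℝ) :
    μ ^ ((∑ j, a j) / Fintype.card κ) ≤ (∑ j, μ ^ a j) / Fintype.card κ := by
  have hκ : (0 : ℝ) < Fintype.card κ := by exact_mod_cast Fintype.card_pos
  have := (convexOn_rpow_left hμ).map_sum_le (t := univ) (w := fun _ => (Fintype.card κ : ℝ)⁻¹)
    (p := a) (fun _ _ => by positivity) (by simp [hκ.ne']) (fun _ _ => Set.mem_univ _)
  simpa [← Finset.mul_sum, div_eq_inv_mul] using this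

theorem card_filter_hammingNorm_le_mul_rpow [Fintype ι] [Nonempty κ] [Fintype F]
    [DecidableEq F] [Zero F] {C : Finset (ι → F)}
    (hbij : ∀ j, Set.BijOn (Is j).restrict (C : Set (ι → F)) Set.univ)
    (hcount : ∀ i, #{j | i ∈ Is j} = t) {k : ℕ} (hk : ∀ j, #(Is j) = k)
    {μ : ℝ} (hμ0 : 0 < μ) (hμ1 : μ ≤ 1) (δ : ℝ) :
    #{c ∈ C | hammingNorm c ≤ δ * Fintype.card ι} * μ ^ (δ * k) ≤
      (1 + (Fintype.card F - 1) * μ) ^ k := by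
  have hm : (0 : ℝ) < Fintype.card κ := by exact_mod_cast Fintype.card_pos
  have hmk : (Fintype.card κ : ℝ) * k = t * Fintype.card ι := by
    exact_mod_cast card_mul_eq_mul_card hcount hk
  set m : ℝ := (Fintype.card κ : ℝ)
  have hmoment : ∑ c ∈ C, ∑ j, μ ^ hammingNorm ((Is j).restrict c) =
      m * (1 + (Fintype.card F - 1) * μ) ^ k := by
    rw [sum_comm]
    have (j : κ) : ∑ c ∈ C, μ ^ hammingNorm ((Is j).restrict c) =
        (1 + (Fintype.card F - 1) * μ) ^ k := by
      rw [sum_nbij (g := fun y => μ ^ hammingNorm y) _ (fun _ _ => mem_univ _) (hbij j).injOn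
        (by simpa using (hbij j).surjOn) (fun _ _ => rfl), sum_pow_hammingNorm, Fintype.card_coe,
        hk]
    simp [this, m]
  have hjensen (c : ι → F) : μ ^ ((t * hammingNorm c : ℝ) / m) ≤
      (∑ j, μ ^ hammingNorm ((Is j).restrict c)) / m := by
    have := rpow_sum_div_card_le hμ0 fun j => (hammingNorm ((Is j).restrict c) : ℝ)
    simpa only [rpow_natCast, ← Nat.cast_sum, sum_hammingNorm_restrict hcount, Nat.cast_mul]
      using this
  calc #{c ∈ C | hammingNorm c ≤ δ * Fintype.card ι} * μ ^ (δ * k)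
      = ∑ c ∈ C with hammingNorm c ≤ δ * Fintype.card ι, μ ^ (δ * k) := by
        rw [sum_const, nsmul_eq_mul]
    _ ≤ ∑ c ∈ C with hammingNorm c ≤ δ * Fintype.card ι, μ ^ ((t * hammingNorm c : ℝ) / m) := by
        refine sum_le_sum fun c hc => rpow_le_rpow_of_exponent_ge hμ0 hμ1 ?_
        rw [div_le_iff₀ hm]
        calc (t * hammingNorm c : ℝ) ≤ t * (δ * Fintype.card ι) :=
              mul_le_mul_of_nonneg_left (mem_filter.1 hc).2 (Nat.cast_nonneg t)
          _ = δ * k * m := by linear_combination -δ * hmk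
    _ ≤ ∑ c ∈ C, μ ^ ((t * hammingNorm c : ℝ) / m) :=
        sum_le_sum_of_subset_of_nonneg (filter_subset _ _) fun _ _ _ => (rpow_pos_of_pos hμ0 _).le
    _ ≤ ∑ c ∈ C, (∑ j, μ ^ hammingNorm ((Is j).restrict c)) / m := sum_le_sum fun c _ => hjensen c
    _ = (1 + (Fintype.card F - 1) * μ) ^ k := by
        rw [← sum_div, hmoment, mul_div_cancel_left₀ _ hm.ne']

theorem rpow_entropy_mul_rpow {q : ℕ} (hq : 2 ≤ q) {δ : ℝ} (hδ0 : 0 < δ) (hδ1 : δ < 1) :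
    (q : ℝ) ^ entropy q δ * (δ / ((1 - δ) * (q - 1))) ^ δ = (1 - δ)⁻¹ := by
  have hq1 : (1 : ℝ) < q := by exact_mod_cast hq
  have hq1' : (0 : ℝ) < q - 1 := sub_pos.2 hq1
  have h1δ : 0 < 1 - δ := sub_pos.2 hδ1
  have hlogq : log q ≠ 0 := (log_pos hq1).ne'
  rw [rpow_def_of_pos (by linarith), rpow_def_of_pos (by positivity), ← exp_add,
    ← exp_log (inv_pos.2 h1δ), log_inv, log_div hδ0.ne' (by positivity),
    log_mul h1δ.ne' hq1'.ne']
  congr 1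
  simp only [entropy, logb]
  field_simp
  ring

theorem card_filter_hammingNorm_le_rpow_entropy [Fintype ι] [Nonempty κ] [Fintype F]
    [DecidableEq F] [Zero F] {C : Finset (ι → F)}
    (hbij : ∀ j, Set.BijOn (Is j).restrict (C : Set (ι → F)) Set.univ)
    (hcount : ∀ i, #{j | i ∈ Is j} = t) {k : ℕ} (hk : ∀ j, #(Is j) = k)
    (hq : 2 ≤ Fintype.card F) {δ : ℝ} (hδ0 : 0 < δ) (hδ1 : δ < 1 - 1 / (Fintype.card F : ℝ)) :
    (#{c ∈ C | hammingNorm c ≤ δ * Fintype.card ι} : ℝ) ≤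
      (Fintype.card F : ℝ) ^ (k * entropy (Fintype.card F) δ) := by
  set q := Fintype.card F
  have hq1 : (0 : ℝ) < q - 1 := by
    rw [sub_pos]
    exact_mod_cast hq
  have hδ1' : δ < 1 := hδ1.trans (sub_lt_self 1 (by positivity))
  have h1δ : 0 < 1 - δ := by linarith
  set μ := δ / ((1 - δ) * (q - 1))
  have hμ0 : 0 < μ := by positivity
  have hμ1 : μ ≤ 1 := by
    rw [div_le_one (by positivity)]
    rw [lt_sub_iff_add_lt, ← lt_sub_iff_add_lt', div_lt_iff₀ (by linarith)] at hδ1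
    nlinarith
  have hbase : 1 + (q - 1) * μ = (1 - δ)⁻¹ := by
    have := hq1.ne'
    simp only [μ]
    field_simp
    ring
  have key := card_filter_hammingNorm_le_mul_rpow hbij hcount hk hμ0 hμ1 δ
  rw [hbase, ← rpow_entropy_mul_rpow hq hδ0 hδ1', mul_pow, ← rpow_natCast, ← rpow_natCast,
    ← rpow_mul (by linarith), ← rpow_mul hμ0.le, mul_comm (entropy q δ)] at key
  exact le_of_mul_le_mul_right key (rpow_pos_of_pos hμ0 _)

end

theorem natCard_subtype_le_rpow_of_subsingleton {α : Type*} [Subsingleton α] (s : Set α)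
    (p : α → Prop) (b e : ℝ) :
    (Nat.card {x // x ∈ s ∧ p x} : ℝ) ≤ b ^ (logb b (Nat.card s) * e) := by
  rcases s.eq_empty_or_nonempty with rfl | ⟨x, hx⟩
  · simp
  · have : Nat.card s = 1 := Nat.card_eq_one_iff_unique.2 ⟨inferInstance, ⟨⟨x, hx⟩⟩⟩
    simp only [this, Nat.cast_one, logb_one, zero_mul, rpow_zero, Nat.cast_le_one]
    exact Finite.card_le_one_iff_subsingleton.2 inferInstance

/-- Assume `0 < δ < 1 − 1/q`. Let `C ⊆ F^n` be a balanced code and set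
`k = log_q |C|`. Then the number of codewords of `C` of Hamming weight at most `δn` satisfies
`|{c ∈ C : w(c) ≤ δn}| ≤ q^{k·h_q(δ)}`. -/
theorem stmt6 {F : Type*} [Field F] [Fintype F] [DecidableEq F] {n : ℕ}
    (q : ℕ) (hqcard : q = Fintype.card F)
    (δ : ℝ) (hδ0 : 0 < δ) (hδ1 : δ < 1 - 1 / (q : ℝ))
    (C : Set (Fin n → F)) (hbal : IsBalancedCode C)
    (k : ℝ) (hk : k = Real.logb q (Nat.card C)) :
    (Nat.card {c : Fin n → F // c ∈ C ∧ (hammingNorm c : ℝ) ≤ δ * n} : ℝ)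
      ≤ (q : ℝ) ^ (k * entropy q δ) := by
  classical
  obtain ⟨m, Is, t, ht, hbij, hcount⟩ := hbal
  subst hqcard hk
  -- for `n = 0` there may be no sets `I_j` to average over
  rcases Nat.eq_zero_or_pos n with rfl | hn
  · exact natCard_subtype_le_rpow_of_subsingleton C _ _ _
  obtain ⟨j₀, -⟩ := card_pos.1 ((hcount ⟨0, hn⟩).symm ▸ ht)
  have : Nonempty (Fin m) := ⟨j₀⟩
  have hq : 2 ≤ Fintype.card F := Fintype.one_lt_card
  have hbij' (j : Fin m) : Set.BijOn (Is j).restrict (C.toFinset : Set (Fin n → F)) Set.univ := by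
    rw [Set.coe_toFinset]
    exact hbij j
  have hC (j : Fin m) := card_eq_pow_of_bijOn_restrict (hbij' j)
  have hk (j : Fin m) : #(Is j) = #(Is j₀) :=
    Nat.pow_right_injective hq ((hC j).symm.trans (hC j₀))
  have hlogb : logb (Fintype.card F) (Nat.card C) = #(Is j₀) := by
    rw [Nat.card_eq_card_toFinset, hC j₀, Nat.cast_pow, logb_pow,
      logb_self_eq_one (by exact_mod_cast hq), mul_one]
  rw [hlogb, Nat.card_eq_fintype_card, Fintype.card_subtype]
  convert card_filter_hammingNorm_le_rpow_entropy hbij' hcount hk hq hδ0 hδ1 using 3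
  ext c; simp
end

section
/- The map τ_{λ,α} : 𝓘 → 𝓘_{λ,α}, sending the class of f(X) in 𝓘 to the class of f(X/λ^{1/(αn)})·ψ_{λ,α}(X) in 𝓘_{λ,α}, is well defined (independent of the representative f), additive, bijective, and satisfies τ_{λ,α}(g(X)·f(X)) = σ_λ(g(X))·τ_{λ,α}(f(X)) for all g(X) ∈ F[X], i.e. it is a σ_λ-semilinear F[X]-module isomorphism. In particular dim_F 𝓘 = dim_F 𝓘_{λ,α} = n − 1. -/
open Polynomial

/-- The quotient ring `F[X]/⟨X^N − c⟩`. -/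
abbrev QA (F : Type*) [CommRing F] (N : ℕ) (c : F) : Type _ :=
  Polynomial F ⧸ Ideal.span {(X : Polynomial F) ^ N - C c}

/-- `ψ_{λ,α}(X) = Σ_{j=0}^{α−1} X^{n(α−1−j)}·(λ^{1/α})^j`, where `lam1a = λ^{1/α}`. -/
noncomputable def psiP (F : Type*) [Field F] (lam1a : F) (n a : ℕ) : Polynomial F :=
  ∑ j ∈ Finset.range a, (X : Polynomial F) ^ (n * (a - 1 - j)) * C (lam1a ^ j)

/-- `ψ⁺_{λ,α}(X) = ((X/λ^{1/(αn)}) − 1)·ψ_{λ,α}(X)`, where `μ = λ^{1/(αn)}`. -/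
noncomputable def psiPlusP (F : Type*) [Field F] (μ lam1a : F) (n a : ℕ) : Polynomial F :=
  (C μ⁻¹ * X - 1) * psiP F lam1a n a

/-- `σ_λ : F[X] → F[X]`, `f(X) ↦ f(X/λ^{1/(αn)})`, where `μ = λ^{1/(αn)}`. -/
noncomputable def sigmaP {F : Type*} [Field F] (μ : F) (f : Polynomial F) : Polynomial F :=
  f.comp (C μ⁻¹ * X)

/-- The ideal `𝓘 = 𝓡·(X−1)` of `𝓡 = F[X]/⟨X^n − 1⟩`. -/
noncomputable def Jcyc (F : Type*) [Field F] (n : ℕ) : Ideal (QA F n 1) :=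
  Ideal.span {Ideal.Quotient.mk (Ideal.span {(X : Polynomial F) ^ n - C 1}) (X - 1)}

/-- The ideal `𝓘_{λ,α} = 𝓡_{λ,α}·ψ⁺_{λ,α}(X)` of `𝓡_{λ,α} = F[X]/⟨X^{αn} − λ⟩`,
where `μ = λ^{1/(αn)}` (so `λ^{1/α} = μ^n`). -/
noncomputable def Jtw (F : Type*) [Field F] (lam μ : F) (n a : ℕ) : Ideal (QA F (a * n) lam) :=
  Ideal.span {Ideal.Quotient.mk (Ideal.span {(X : Polynomial F) ^ (a * n) - C lam})
    (psiPlusP F μ (μ ^ n) n a)}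

/-! The substitution `σ : X ↦ X/μ` is an `F`-algebra automorphism of `F[X]`, so `f ↦ σ(f)·ψ` is a
`σ`-semilinear injective map of `F[X]` to itself. A geometric sum gives
`σ(Xⁿ − 1)·ψ = μ⁻ⁿ·(X^{αn} − λ)`, so this map sends the ideal `⟨Xⁿ − 1⟩` onto `⟨X^{αn} − λ⟩`
(cancel `ψ ≠ 0`) and therefore descends to an injective map `𝓡 → 𝓡_{λ,α}`; as
`σ(X − 1)·ψ = ψ⁺`, it carries `𝓘` onto `𝓘_{λ,α}`. Finally `dim 𝓘 = dim 𝓡 − dim 𝓡/𝓘 = n − 1`,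
because `𝓡/𝓘 ≅ F[X]/⟨X − 1⟩`. -/

section Twist

variable {K R : Type*} [CommRing K] [CommRing R] [Algebra K R] (σ : R ≃ₐ[K] R) (ψ : R)

def twistMul : R →ₛₗ[(σ : R →+* R)] R where
  toFun f := σ f * ψ
  map_add' f g := by rw [map_add, add_mul]
  map_smul' c f := by simp [mul_assoc]

variable {p P : R}

def twistMulQuot (hP : P ∣ σ p * ψ) :
    R ⧸ Ideal.span {p} →ₛₗ[(σ : R →+* R)] R ⧸ Ideal.span {P} :=
  Submodule.mapQ _ _ (twistMul σ ψ) <| (Submodule.span_singleton_le_iff_mem _ _).2 <|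
    Ideal.mem_span_singleton.2 hP

variable {σ ψ}

theorem twistMulQuot_mk (hP : P ∣ σ p * ψ) (f : R) :
    twistMulQuot σ ψ hP (Ideal.Quotient.mk _ f) = Ideal.Quotient.mk _ (σ f * ψ) :=
  rfl

theorem twistMulQuot_mk_mul (hP : P ∣ σ p * ψ) (g : R) (x : R ⧸ Ideal.span {p}) :
    twistMulQuot σ ψ hP (Ideal.Quotient.mk _ g * x) =
      Ideal.Quotient.mk _ (σ g) * twistMulQuot σ ψ hP x := by
  simpa [Algebra.smul_def] using (twistMulQuot σ ψ hP).map_smulₛₗ g x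

theorem twistMulQuot_smul (hP : P ∣ σ p * ψ) (c : K) (x : R ⧸ Ideal.span {p}) :
    twistMulQuot σ ψ hP (c • x) = c • twistMulQuot σ ψ hP x := by
  rw [← algebraMap_smul R, (twistMulQuot σ ψ hP).map_smulₛₗ]
  simp

theorem twistMulQuot_injective [IsDomain R] (hψ : ψ ≠ 0) (hP : P ∣ σ p * ψ) (hP' : σ p * ψ ∣ P) :
    Function.Injective (twistMulQuot σ ψ hP) := by
  refine (injective_iff_map_eq_zero _).2 fun x hx => ?_
  obtain ⟨f, rfl⟩ := Ideal.Quotient.mk_surjective x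
  rw [twistMulQuot_mk, Ideal.Quotient.eq_zero_iff_mem, Ideal.mem_span_singleton] at hx
  have : σ p ∣ σ f := (mul_dvd_mul_iff_right hψ).1 (hP'.trans hx)
  rwa [Ideal.Quotient.eq_zero_iff_mem, Ideal.mem_span_singleton, ← map_dvd_iff σ]

variable {d D : R}

theorem twistMulQuot_mem_span (hP : P ∣ σ p * ψ) (hD : σ d * ψ = D) {x : R ⧸ Ideal.span {p}}
    (hx : x ∈ Ideal.span {Ideal.Quotient.mk _ d}) :
    twistMulQuot σ ψ hP x ∈ Ideal.span {Ideal.Quotient.mk (Ideal.span {P}) D} := by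
  obtain ⟨a, rfl⟩ := Ideal.mem_span_singleton'.1 hx
  obtain ⟨g, rfl⟩ := Ideal.Quotient.mk_surjective a
  rw [twistMulQuot_mk_mul, twistMulQuot_mk, hD]
  exact Ideal.mul_mem_left _ _ (Ideal.mem_span_singleton_self _)

def twistMulIdeal (hP : P ∣ σ p * ψ) (hD : σ d * ψ = D) :
    Ideal.span {Ideal.Quotient.mk (Ideal.span {p}) d} →ₗ[K]
      Ideal.span {Ideal.Quotient.mk (Ideal.span {P}) D} where
  toFun x := ⟨twistMulQuot σ ψ hP x, twistMulQuot_mem_span hP hD x.2⟩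
  map_add' _ _ := Subtype.ext (map_add _ _ _)
  map_smul' c x := Subtype.ext (twistMulQuot_smul hP c x)

theorem twistMulIdeal_apply (hP : P ∣ σ p * ψ) (hD : σ d * ψ = D) (x) :
    (twistMulIdeal hP hD x : R ⧸ Ideal.span {P}) = twistMulQuot σ ψ hP x :=
  rfl

theorem twistMulIdeal_bijective [IsDomain R] (hψ : ψ ≠ 0) (hP : P ∣ σ p * ψ) (hP' : σ p * ψ ∣ P)
    (hD : σ d * ψ = D) : Function.Bijective (twistMulIdeal hP hD) := by
  refine ⟨fun x y hxy => Subtype.ext (twistMulQuot_injective hψ hP hP' congr(Subtype.val $hxy)),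
    fun y => ?_⟩
  obtain ⟨b, hb⟩ := Ideal.mem_span_singleton'.1 y.2
  obtain ⟨g, rfl⟩ := Ideal.Quotient.mk_surjective b
  refine ⟨⟨Ideal.Quotient.mk _ (σ.symm g * d),
    Ideal.mem_span_singleton'.2 ⟨_, (map_mul _ _ _).symm⟩⟩, Subtype.ext ?_⟩
  rw [twistMulIdeal_apply, twistMulQuot_mk, ← hb, ← map_mul, ← hD, map_mul σ, σ.apply_symm_apply,
    mul_assoc]

end Twist

theorem finrank_span_mk_of_dvd {K : Type*} [Field K] {p d : K[X]} (hp : p ≠ 0) (hd : d ∣ p) :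
    Module.finrank K (Ideal.span {Ideal.Quotient.mk (Ideal.span {p}) d}) =
      p.natDegree - d.natDegree := by
  have : Module.Finite K (K[X] ⧸ Ideal.span {p}) := (AdjoinRoot.powerBasis hp).finite
  have hmap : Ideal.span {Ideal.Quotient.mk (Ideal.span {p}) d} =
      (Ideal.span {d}).map (Ideal.Quotient.mkₐ K (Ideal.span {p})) := by
    rw [Ideal.map_span, Set.image_singleton]
    rfl
  set J := (Ideal.span {d}).map (Ideal.Quotient.mkₐ K (Ideal.span {p}))
  have hquot : Module.finrank K ((K[X] ⧸ Ideal.span {p}) ⧸ J) = d.natDegree :=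
    (DoubleQuot.quotQuotEquivQuotOfLEₐ K (Ideal.span_singleton_le_span_singleton.2 hd)
      ).toLinearEquiv.finrank_eq.trans finrank_quotient_span_eq_natDegree
  have hadd : Module.finrank K ((K[X] ⧸ Ideal.span {p}) ⧸ J) + Module.finrank K J =
      Module.finrank K (K[X] ⧸ Ideal.span {p}) :=
    (J.restrictScalars K).finrank_quotient_add_finrank
  rw [finrank_quotient_span_eq_natDegree] at hadd
  rw [hmap]
  omega

section Sigma

variable {F : Type*} [Field F]

noncomputable def sigmaAlgEquiv (μ : F) (hμ : μ ≠ 0) : F[X] ≃ₐ[F] F[X] :=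
  algEquivOfCompEqX (C μ⁻¹ * X) (C μ * X)
    (by simp [← mul_assoc, ← C_mul, inv_mul_cancel₀ hμ])
    (by simp [← mul_assoc, ← C_mul, mul_inv_cancel₀ hμ])

theorem sigmaAlgEquiv_apply (μ : F) (hμ : μ ≠ 0) (f : F[X]) :
    sigmaAlgEquiv μ hμ f = sigmaP μ f := by
  rw [sigmaAlgEquiv, algEquivOfCompEqX_apply, sigmaP, comp_eq_aeval]

theorem psiP_mul_X_pow_sub_C (c : F) (n a : ℕ) :
    psiP F c n a * (X ^ n - C c) = X ^ (a * n) - C (c ^ a) := by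
  have hψ : psiP F c n a = ∑ j ∈ Finset.range a, C c ^ j * ((X : F[X]) ^ n) ^ (a - 1 - j) :=
    Finset.sum_congr rfl fun j _ => by rw [pow_mul, C_pow, mul_comm]
  rw [hψ, ← neg_sub (C c), mul_neg, geom_sum₂_mul, neg_sub, ← pow_mul, ← C_pow, Nat.mul_comm]

theorem psiP_ne_zero (c : F) {n a : ℕ} (hn : 0 < n) (ha : 0 < a) : psiP F c n a ≠ 0 := by
  intro h
  have := psiP_mul_X_pow_sub_C c n a
  rw [h, zero_mul] at this
  exact (monic_X_pow_sub_C (c ^ a) (by positivity)).ne_zero this.symm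

theorem sigmaP_X_pow_sub_one_mul_psiP {μ : F} (hμ : μ ≠ 0) (n a : ℕ) :
    sigmaP μ (X ^ n - C 1) * psiP F (μ ^ n) n a =
      C (μ ^ n)⁻¹ * (X ^ (a * n) - C (μ ^ (a * n))) := by
  have hσ : sigmaP μ (X ^ n - C 1) = C (μ ^ n)⁻¹ * (X ^ n - C (μ ^ n)) := by
    rw [sigmaP, sub_comp, pow_comp, X_comp, C_comp, mul_pow, ← C_pow, inv_pow, mul_sub, ← C_mul,
      inv_mul_cancel₀ (pow_ne_zero n hμ), C_1]
  rw [hσ, mul_assoc, mul_comm _ (psiP F _ n a), psiP_mul_X_pow_sub_C, ← pow_mul, Nat.mul_comm n a]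

theorem sigmaP_X_sub_one_mul_psiP (μ c : F) (n a : ℕ) :
    sigmaP μ (X - 1) * psiP F c n a = psiPlusP F μ c n a := by
  rw [sigmaP, sub_comp, X_comp, one_comp, psiPlusP]

end Sigma

theorem stmt9_general {F : Type*} [Field F]
    (lam : Fˣ)
    (α n : ℕ) (hα : 0 < α) (hn : 0 < n)
    (μ : Fˣ) (hμpow : μ ^ (α * n) = lam) :
    (∃ τ : Jcyc F n →+ Jtw F (lam : F) (μ : F) n α,
      (∀ (f : Polynomial F)
          (hf : Ideal.Quotient.mk (Ideal.span {(X : Polynomial F) ^ n - C 1}) f ∈ Jcyc F n),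
        (τ ⟨Ideal.Quotient.mk _ f, hf⟩ : QA F (α * n) (lam : F)) =
          Ideal.Quotient.mk (Ideal.span {(X : Polynomial F) ^ (α * n) - C (lam : F)})
            (sigmaP (μ : F) f * psiP F ((μ : F) ^ n) n α)) ∧
      Function.Bijective τ ∧
      (∀ (g : Polynomial F) (x : Jcyc F n),
        (τ ⟨Ideal.Quotient.mk (Ideal.span {(X : Polynomial F) ^ n - C 1}) g * (x : QA F n 1),
            (Jcyc F n).mul_mem_left _ x.2⟩ : QA F (α * n) (lam : F)) =
          Ideal.Quotient.mk (Ideal.span {(X : Polynomial F) ^ (α * n) - C (lam : F)})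
            (sigmaP (μ : F) g) * (τ x : QA F (α * n) (lam : F)))) ∧
    Module.finrank F (Jcyc F n) = n - 1 ∧
    Module.finrank F (Jtw F (lam : F) (μ : F) n α) = n - 1 := by
  set σ := sigmaAlgEquiv (μ : F) μ.ne_zero
  have hkey : σ (X ^ n - C 1) * psiP F ((μ : F) ^ n) n α =
      C ((μ : F) ^ n)⁻¹ * (X ^ (α * n) - C (lam : F)) := by
    rw [sigmaAlgEquiv_apply, sigmaP_X_pow_sub_one_mul_psiP μ.ne_zero, ← hμpow,
      Units.val_pow_eq_pow_val]
  have hP : X ^ (α * n) - C (lam : F) ∣ σ (X ^ n - C 1) * psiP F ((μ : F) ^ n) n α :=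
    hkey ▸ dvd_mul_left _ _
  have hP' : σ (X ^ n - C 1) * psiP F ((μ : F) ^ n) n α ∣ X ^ (α * n) - C (lam : F) := by
    rw [hkey]
    exact (isUnit_C.2 (inv_ne_zero (pow_ne_zero n μ.ne_zero)).isUnit).mul_left_dvd.2 dvd_rfl
  have hD : σ (X - 1) * psiP F ((μ : F) ^ n) n α = psiPlusP F μ ((μ : F) ^ n) n α := by
    rw [sigmaAlgEquiv_apply, sigmaP_X_sub_one_mul_psiP]
  let τ : Jcyc F n ≃ₗ[F] Jtw F (lam : F) (μ : F) n α :=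
    .ofBijective (twistMulIdeal hP hD) (twistMulIdeal_bijective (psiP_ne_zero _ hn hα) hP hP' hD)
  have hJcyc : Module.finrank F (Jcyc F n) = n - 1 := by
    rw [Jcyc, finrank_span_mk_of_dvd (X_pow_sub_C_ne_zero hn 1) ?_, natDegree_X_pow_sub_C,
      ← C_1, natDegree_X_sub_C]
    simpa using sub_dvd_pow_sub_pow (X : F[X]) 1 n
  refine ⟨⟨τ.toAddMonoidHom, fun f _ => ?_, τ.bijective, fun g x => ?_⟩, hJcyc,
    τ.finrank_eq.symm.trans hJcyc⟩
  · exact (twistMulQuot_mk hP f).trans (by rw [sigmaAlgEquiv_apply])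
  · exact (twistMulQuot_mk_mul hP g x).trans (by rw [sigmaAlgEquiv_apply]; rfl)

/-- The map `τ_{λ,α} : 𝓘 → 𝓘_{λ,α}`, sending the class of `f(X)` in `𝓘` to
the class of `f(X/λ^{1/(αn)})·ψ_{λ,α}(X)` in `𝓘_{λ,α}`, is well defined (independent of the
representative `f`), additive, bijective, and satisfies
`τ_{λ,α}(g(X)·f(X)) = σ_λ(g(X))·τ_{λ,α}(f(X))` for all `g(X) ∈ F[X]`, i.e. it is a
`σ_λ`-semilinear `F[X]`-module isomorphism.  In particular
`dim_F 𝓘 = dim_F 𝓘_{λ,α} = n − 1`. -/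
theorem stmt9 {F : Type*} [Field F] [Fintype F]
    (q : ℕ) (hq : q = Fintype.card F)
    (lam : Fˣ) (t : ℕ) (ht : t = orderOf lam)
    (α n : ℕ) (hα : 0 < α) (hn : 0 < n)
    (hαt : Nat.gcd α t = 1) (hnqt : Nat.gcd n (q * t) = 1)
    (μ : Fˣ) (hμ : μ ∈ Subgroup.zpowers lam) (hμpow : μ ^ (α * n) = lam) :
    (∃ τ : Jcyc F n →+ Jtw F (lam : F) (μ : F) n α,
      (∀ (f : Polynomial F)
          (hf : Ideal.Quotient.mk (Ideal.span {(X : Polynomial F) ^ n - C 1}) f ∈ Jcyc F n),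
        (τ ⟨Ideal.Quotient.mk _ f, hf⟩ : QA F (α * n) (lam : F)) =
          Ideal.Quotient.mk (Ideal.span {(X : Polynomial F) ^ (α * n) - C (lam : F)})
            (sigmaP (μ : F) f * psiP F ((μ : F) ^ n) n α)) ∧
      Function.Bijective τ ∧
      (∀ (g : Polynomial F) (x : Jcyc F n),
        (τ ⟨Ideal.Quotient.mk (Ideal.span {(X : Polynomial F) ^ n - C 1}) g * (x : QA F n 1),
            (Jcyc F n).mul_mem_left _ x.2⟩ : QA F (α * n) (lam : F)) =
          Ideal.Quotient.mk (Ideal.span {(X : Polynomial F) ^ (α * n) - C (lam : F)})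
            (sigmaP (μ : F) g) * (τ x : QA F (α * n) (lam : F)))) ∧
    Module.finrank F (Jcyc F n) = n - 1 ∧
    Module.finrank F (Jtw F (lam : F) (μ : F) n α) = n - 1 :=
  stmt9_general lam α n hα hn μ hμpow
end

section
/- For every integer d with μ(n) ≤ d ≤ n − 1, the number of F[X]-submodules of 𝓘 of F-dimension d is at most n^{d/μ(n)}. -/
/-!
A submodule `C` of `F[X]/(X^n - 1)` is `(g)/(X^n - 1)` for a monic divisor `g` of `X^n - 1`, and
its `F`-dimension is the degree of `h = (X^n - 1)/g`, which determines `C`. If `C ⊆ 𝓘` then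
`X - 1 ∣ g`, so, `X^n - 1` being squarefree since `gcd(n, q) = 1`, every irreducible factor of `h`
is one of `φ₁, …, φ_m` and has degree at least `μ(n)`. Hence `h` has at most `⌊d/μ(n)⌋` factors,
and padding with `1` writes it as a product of exactly `⌊d/μ(n)⌋` elements of
`{1, φ₁, …, φ_m}`, a set of at most `n` elements.
-/

open Polynomial

/-- `μ(n)`: the minimum degree of a monic irreducible divisor of `X^n − 1` other than
`X − 1` (i.e. `min{deg φ₁, …, deg φ_m}` in the factorization
`X^n − 1 = (X−1)·φ₁⋯φ_m`). -/
noncomputable def mun (F : Type*) [Field F] (n : ℕ) : ℕ :=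
  sInf {d : ℕ | ∃ g : Polynomial F, g.Monic ∧ Irreducible g ∧
    g ∣ ((X : Polynomial F) ^ n - 1) ∧ g ≠ X - 1 ∧ g.natDegree = d}

open UniqueFactorizationMonoid

theorem Multiset.exists_fin_prod_eq_prod {M : Type*} [CommMonoid M] {S : Set M} (h1 : 1 ∈ S)
    (s : Multiset M) (hs : ∀ x ∈ s, x ∈ S) {k : ℕ} (hk : Multiset.card s ≤ k) :
    ∃ v : Fin k → M, (∀ i, v i ∈ S) ∧ ∏ i, v i = s.prod := by
  induction s using Multiset.induction_on generalizing k with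
  | empty => exact ⟨1, fun _ => h1, by simp⟩
  | cons a s ih =>
    rw [Multiset.card_cons] at hk
    obtain ⟨k, rfl⟩ : ∃ k', k = k' + 1 := ⟨k - 1, by omega⟩
    obtain ⟨v, hvS, hv⟩ := ih (k := k) (fun x hx => hs x (Multiset.mem_cons_of_mem hx)) (by omega)
    refine ⟨Fin.cons a v, Fin.cases (hs a (Multiset.mem_cons_self a s)) hvS, ?_⟩
    rw [Fin.prod_cons, hv, Multiset.prod_cons]

namespace Polynomial.Monic

variable {K : Type*} [Field K] [DecidableEq K] {c : K[X]}

theorem prod_normalizedFactors (hc : c.Monic) : (normalizedFactors c).prod = c := by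
  rw [prod_normalizedFactors_eq hc.ne_zero, hc.normalize_eq_self]

theorem card_normalizedFactors_mul_le_natDegree (hc : c.Monic) {m : ℕ}
    (hm : ∀ p ∈ normalizedFactors c, m ≤ p.natDegree) :
    Multiset.card (normalizedFactors c) * m ≤ c.natDegree := by
  conv_rhs => rw [← hc.prod_normalizedFactors]
  rw [natDegree_multiset_prod _ (zero_notMem_normalizedFactors c), ← smul_eq_mul,
    ← Multiset.card_map natDegree]
  exact Multiset.card_nsmul_le_sum (by simpa using hm)

theorem card_normalizedFactors_le_natDegree (hc : c.Monic) :
    Multiset.card (normalizedFactors c) ≤ c.natDegree := by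
  simpa using hc.card_normalizedFactors_mul_le_natDegree fun p hp =>
    (irreducible_of_normalized_factor p hp).natDegree_pos

end Polynomial.Monic

section GeneratorPoly

variable {K : Type*} [Field K] {f : K[X]}

/-- The monic generator of the preimage of `CC` in `K[X]`. For a cyclic code `CC` this is its
generator polynomial, and `checkPoly CC` is its check polynomial. -/
noncomputable def generatorPoly (CC : Submodule K[X] (K[X] ⧸ Ideal.span {f})) : K[X] :=
  let p := Submodule.IsPrincipal.generator (CC.comap (Algebra.linearMap K[X] _))
  p * C p.leadingCoeff⁻¹

noncomputable def checkPoly (CC : Submodule K[X] (K[X] ⧸ Ideal.span {f})) : K[X] :=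
  f / generatorPoly CC

variable (CC : Submodule K[X] (K[X] ⧸ Ideal.span {f}))

theorem span_generatorPoly :
    Ideal.span {generatorPoly CC} = CC.comap (Algebra.linearMap K[X] _) := by
  set p := Submodule.IsPrincipal.generator (CC.comap (Algebra.linearMap K[X] _))
  conv_rhs => rw [← Ideal.span_singleton_generator (CC.comap _)]
  by_cases hp : p = 0
  · simp [generatorPoly, p, hp]
  · exact Ideal.span_singleton_mul_right_unit
      (isUnit_C.mpr (inv_ne_zero (leadingCoeff_ne_zero.mpr hp)).isUnit) p

theorem mk_generatorPoly_mem : Ideal.Quotient.mk _ (generatorPoly CC) ∈ CC :=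
  (span_generatorPoly CC).le (Ideal.mem_span_singleton_self _)

theorem generatorPoly_dvd : generatorPoly CC ∣ f := by
  rw [← Ideal.mem_span_singleton, span_generatorPoly, Submodule.mem_comap, Algebra.linearMap_apply,
    Ideal.Quotient.algebraMap_eq, Ideal.Quotient.mk_singleton_self]
  exact CC.zero_mem

theorem generatorPoly_monic (hf : f ≠ 0) : (generatorPoly CC).Monic := by
  refine monic_mul_leadingCoeff_inv fun hp => hf ?_
  have hg : generatorPoly CC = 0 := by simp only [generatorPoly, hp, zero_mul]
  simpa [hg] using generatorPoly_dvd CC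

theorem generatorPoly_mul_checkPoly (hf : f ≠ 0) : generatorPoly CC * checkPoly CC = f :=
  EuclideanDomain.mul_div_cancel' (generatorPoly_monic CC hf).ne_zero (generatorPoly_dvd CC)

theorem checkPoly_monic (hf : f.Monic) : (checkPoly CC).Monic :=
  (generatorPoly_monic CC hf.ne_zero).of_mul_monic_left
    (by rwa [generatorPoly_mul_checkPoly CC hf.ne_zero])

theorem checkPoly_ne_zero (hf : f ≠ 0) : checkPoly CC ≠ 0 :=
  right_ne_zero_of_mul (a := generatorPoly CC) (by rwa [generatorPoly_mul_checkPoly CC hf])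

theorem checkPoly_injective (hf : f ≠ 0) :
    Function.Injective (checkPoly : Submodule K[X] (K[X] ⧸ Ideal.span {f}) → K[X]) := by
  intro CC₁ CC₂ h
  have hg : generatorPoly CC₁ = generatorPoly CC₂ :=
    mul_right_cancel₀ (checkPoly_ne_zero CC₂ hf) (by
      rw [generatorPoly_mul_checkPoly CC₂ hf, ← h, generatorPoly_mul_checkPoly CC₁ hf])
  have hsurj : Function.Surjective (Algebra.linearMap K[X] (K[X] ⧸ Ideal.span {f})) :=
    Ideal.Quotient.mk_surjective
  apply Submodule.comap_injective_of_surjective hsurj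
  rw [← span_generatorPoly, ← span_generatorPoly, hg]

theorem finrank_eq_natDegree_checkPoly (hf : f ≠ 0) :
    Module.finrank K CC = (checkPoly CC).natDegree := by
  have : Module.Finite K (K[X] ⧸ Ideal.span {f}) :=
    Module.Finite.of_basis (AdjoinRoot.powerBasis hf).basis
  let π := CC.mkQ ∘ₗ Algebra.linearMap K[X] (K[X] ⧸ Ideal.span {f})
  have hπ : Function.Surjective π := (CC.mkQ_surjective).comp Ideal.Quotient.mk_surjective
  have hker : LinearMap.ker π = Ideal.span {generatorPoly CC} := by
    rw [LinearMap.ker_comp, Submodule.ker_mkQ, span_generatorPoly]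
  have hquot : Module.finrank K ((K[X] ⧸ Ideal.span {f}) ⧸ CC) = (generatorPoly CC).natDegree := by
    rw [← finrank_quotient_span_eq_natDegree, ← hker]
    exact ((π.quotKerEquivOfSurjective hπ).restrictScalars K).finrank_eq.symm
  have hsum := (CC.restrictScalars K).finrank_quotient_add_finrank
  rw [(Submodule.Quotient.restrictScalarsEquiv K CC).finrank_eq, hquot,
    finrank_quotient_span_eq_natDegree] at hsum
  have hdeg : (generatorPoly CC).natDegree + (checkPoly CC).natDegree = f.natDegree := by
    rw [← natDegree_mul (generatorPoly_monic CC hf).ne_zero (checkPoly_ne_zero CC hf),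
      generatorPoly_mul_checkPoly CC hf]
  change _ + Module.finrank K CC = _ at hsum
  omega

theorem dvd_generatorPoly {a : K[X]} (ha : a ∣ f)
    (hCC : (CC : Set (K[X] ⧸ Ideal.span {f})) ⊆
      (Ideal.span {Ideal.Quotient.mk (Ideal.span {f}) a} : Set (K[X] ⧸ Ideal.span {f}))) :
    a ∣ generatorPoly CC := by
  obtain ⟨b, hb⟩ := Ideal.mem_span_singleton'.mp (hCC (mk_generatorPoly_mem CC))
  obtain ⟨b, rfl⟩ := Ideal.Quotient.mk_surjective b
  rw [← map_mul, Ideal.Quotient.eq, Ideal.mem_span_singleton] at hb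
  simpa using dvd_sub (dvd_mul_left a b) (ha.trans hb)

theorem mem_normalizedFactors_checkPoly [DecidableEq K] (hf : Squarefree f) {a p : K[X]}
    (ha : a ∣ generatorPoly CC) (hp : p ∈ normalizedFactors (checkPoly CC)) :
    p ∈ normalizedFactors f ∧ p ≠ a := by
  have hgc := generatorPoly_mul_checkPoly CC hf.ne_zero
  have hc0 : checkPoly CC ≠ 0 := right_ne_zero_of_mul (hgc ▸ hf.ne_zero)
  obtain ⟨hirr, hmonic, hpc⟩ := (Polynomial.mem_normalizedFactors_iff hc0).mp hp
  refine ⟨(Polynomial.mem_normalizedFactors_iff hf.ne_zero).mpr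
    ⟨hirr, hmonic, hpc.trans (Dvd.intro_left _ hgc)⟩, ?_⟩
  rintro rfl
  exact hirr.not_isUnit (hf p (hgc ▸ mul_dvd_mul ha hpc))

end GeneratorPoly

theorem squarefree_X_pow_sub_one {F : Type*} [Field F] [Fintype F] {n : ℕ}
    (hn : n.Coprime (Fintype.card F)) : Squarefree (X ^ n - 1 : F[X]) := by
  refine (X_pow_sub_one_separable_iff.mpr fun h => ?_).squarefree
  have hchar := Nat.dvd_gcd ((CharP.cast_eq_zero_iff F (ringChar F) n).mp h)
    ((CharP.cast_eq_zero_iff F (ringChar F) _).mp (FiniteField.cast_card_eq_zero F))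
  rw [hn.gcd_eq_one, Nat.dvd_one] at hchar
  exact CharP.ringChar_ne_one hchar

section Cyclic

variable {F : Type*} [Field F] {n : ℕ}

theorem mun_le_natDegree {p : F[X]} (hp : p.Monic) (hirr : Irreducible p)
    (hdvd : p ∣ X ^ n - 1) (hne : p ≠ X - 1) : mun F n ≤ p.natDegree :=
  Nat.sInf_le ⟨p, hp, hirr, hdvd, hne, rfl⟩

theorem mun_pos {p : F[X]} (hp : p.Monic) (hirr : Irreducible p)
    (hdvd : p ∣ X ^ n - 1) (hne : p ≠ X - 1) : 0 < mun F n := by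
  rw [mun, Nat.pos_iff_ne_zero, Ne, Nat.sInf_eq_zero, not_or]
  exact ⟨fun ⟨g, _, hg, _, _, hdeg⟩ => hg.natDegree_pos.ne' hdeg,
    Set.nonempty_iff_ne_empty.mp ⟨_, p, hp, hirr, hdvd, hne, rfl⟩⟩

theorem X_sub_one_dvd_generatorPoly (CC : Submodule F[X] (QA F n 1))
    (hCC : (CC : Set (QA F n 1)) ⊆ Jcyc F n) : X - 1 ∣ generatorPoly CC :=
  dvd_generatorPoly CC (by simpa using sub_dvd_pow_sub_pow (X : F[X]) 1 n) hCC

variable [DecidableEq F]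

theorem card_normalizedFactors_checkPoly_le (hn : 0 < n) (hsq : Squarefree (X ^ n - C 1 : F[X]))
    (CC : Submodule F[X] (QA F n 1)) (hCC : (CC : Set (QA F n 1)) ⊆ Jcyc F n) :
    Multiset.card (normalizedFactors (checkPoly CC)) ≤ Module.finrank F CC / mun F n := by
  have hP : (X ^ n - C 1 : F[X]).Monic := monic_X_pow_sub_C 1 hn.ne'
  have hμ : ∀ p ∈ normalizedFactors (checkPoly CC), mun F n ≤ p.natDegree ∧ 0 < mun F n := by
    intro p hp
    obtain ⟨hpP, hne⟩ :=
      mem_normalizedFactors_checkPoly CC hsq (X_sub_one_dvd_generatorPoly CC hCC) hp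
    obtain ⟨hirr, hmon, hdvd⟩ := (Polynomial.mem_normalizedFactors_iff hP.ne_zero).mp hpP
    rw [C_1] at hdvd
    exact ⟨mun_le_natDegree hmon hirr hdvd hne, mun_pos hmon hirr hdvd hne⟩
  -- Without a factor `p`, `mun F n` may be the junk value `sInf ∅ = 0`.
  rcases (normalizedFactors (checkPoly CC)).empty_or_exists_mem with h | ⟨p, hp⟩
  · simp [h]
  · rw [Nat.le_div_iff_mul_le (hμ p hp).2, finrank_eq_natDegree_checkPoly CC hP.ne_zero]
    exact (checkPoly_monic CC hP).card_normalizedFactors_mul_le_natDegree fun p hp => (hμ p hp).1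

variable (F n) in
/-- The alphabet `{1, φ₁, …, φ_m}`; `1` pads shorter factorizations to a fixed length. -/
noncomputable def factorsWithOne : Finset F[X] :=
  insert 1 ((normalizedFactors (X ^ n - C 1 : F[X])).toFinset.erase (X - 1))

theorem card_factorsWithOne_le (hn : 0 < n) : (factorsWithOne F n).card ≤ n := by
  have hP : (X ^ n - C 1 : F[X]).Monic := monic_X_pow_sub_C 1 hn.ne'
  have hX1 : X - 1 ∈ (normalizedFactors (X ^ n - C 1 : F[X])).toFinset := by
    rw [Multiset.mem_toFinset, Polynomial.mem_normalizedFactors_iff hP.ne_zero, ← C_1]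
    exact ⟨irreducible_X_sub_C 1, monic_X_sub_C 1,
      by simpa using sub_dvd_pow_sub_pow (X : F[X]) 1 n⟩
  calc (factorsWithOne F n).card
      ≤ ((normalizedFactors (X ^ n - C 1 : F[X])).toFinset.erase (X - 1)).card + 1 :=
        Finset.card_insert_le _ _
    _ = (normalizedFactors (X ^ n - C 1 : F[X])).toFinset.card := Finset.card_erase_add_one hX1
    _ ≤ Multiset.card (normalizedFactors (X ^ n - C 1 : F[X])) := Multiset.toFinset_card_le _
    _ ≤ n := hP.card_normalizedFactors_le_natDegree.trans_eq natDegree_X_pow_sub_C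

theorem exists_prod_eq_checkPoly (hn : 0 < n) (hsq : Squarefree (X ^ n - C 1 : F[X]))
    (CC : Submodule F[X] (QA F n 1)) (hCC : (CC : Set (QA F n 1)) ⊆ Jcyc F n) :
    ∃ v : Fin (Module.finrank F CC / mun F n) → F[X],
      (∀ i, v i ∈ factorsWithOne F n) ∧ ∏ i, v i = checkPoly CC := by
  have hP : (X ^ n - C 1 : F[X]).Monic := monic_X_pow_sub_C 1 hn.ne'
  rw [← (checkPoly_monic CC hP).prod_normalizedFactors]
  refine Multiset.exists_fin_prod_eq_prod (Finset.mem_insert_self _ _) _ (fun p hp => ?_)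
    (card_normalizedFactors_checkPoly_le hn hsq CC hCC)
  obtain ⟨hpP, hne⟩ :=
    mem_normalizedFactors_checkPoly CC hsq (X_sub_one_dvd_generatorPoly CC hCC) hp
  exact Finset.mem_insert_of_mem (Finset.mem_erase.mpr ⟨hne, Multiset.mem_toFinset.mpr hpP⟩)

end Cyclic

theorem card_submodules_le_pow {F : Type*} [Field F] {n : ℕ} (hn : 0 < n)
    (hsq : Squarefree (X ^ n - C 1 : F[X])) (d : ℕ) :
    Nat.card {CC : Submodule F[X] (QA F n 1) //
        (CC : Set (QA F n 1)) ⊆ Jcyc F n ∧ Module.finrank F CC = d} ≤ n ^ (d / mun F n) := by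
  classical
  let words := (Fintype.piFinset fun _ : Fin (d / mun F n) => factorsWithOne F n).image
    fun v => ∏ i, v i
  have hwords (CC : {CC : Submodule F[X] (QA F n 1) //
      (CC : Set (QA F n 1)) ⊆ Jcyc F n ∧ Module.finrank F CC = d}) : checkPoly CC.1 ∈ words := by
    obtain ⟨CC, hCC, rfl⟩ := CC
    obtain ⟨v, hv, hprod⟩ := exists_prod_eq_checkPoly hn hsq CC hCC
    exact Finset.mem_image.mpr ⟨v, Fintype.mem_piFinset.mpr hv, hprod⟩
  calc _ ≤ Nat.card words := Nat.card_le_card_of_injective _ <| Subtype.coind_injective hwords <|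
          (checkPoly_injective (monic_X_pow_sub_C 1 hn.ne').ne_zero).comp Subtype.val_injective
    _ ≤ (factorsWithOne F n).card ^ (d / mun F n) := by
      rw [Nat.card_eq_finsetCard]
      refine Finset.card_image_le.trans ?_
      rw [Fintype.card_piFinset, Finset.prod_const, Finset.card_univ, Fintype.card_fin]
    _ ≤ n ^ (d / mun F n) := Nat.pow_le_pow_left (card_factorsWithOne_le hn) _

theorem stmt11_general {F : Type*} [Field F] [Fintype F]
    (q : ℕ) (hq : q = Fintype.card F)
    (n : ℕ) (hn : 0 < n) (hnq : Nat.gcd n q = 1)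
    (d : ℕ) :
    (Nat.card {CC : Submodule (Polynomial F) (QA F n 1) //
        (CC : Set (QA F n 1)) ⊆ (Jcyc F n : Set (QA F n 1)) ∧
        Module.finrank F CC = d} : ℝ)
      ≤ (n : ℝ) ^ ((d : ℝ) / (mun F n : ℝ)) := by
  have hsq : Squarefree (X ^ n - C 1 : F[X]) := by
    rw [C_1]; exact squarefree_X_pow_sub_one (hq ▸ hnq)
  calc _ ≤ ((n ^ (d / mun F n) : ℕ) : ℝ) := by exact_mod_cast card_submodules_le_pow hn hsq d
    _ = (n : ℝ) ^ ((d / mun F n : ℕ) : ℝ) := by rw [Real.rpow_natCast, Nat.cast_pow]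
    _ ≤ (n : ℝ) ^ ((d : ℝ) / (mun F n : ℝ)) :=
      Real.rpow_le_rpow_of_exponent_le (by exact_mod_cast hn) Nat.cast_div_le

/-- For every integer `d` with `μ(n) ≤ d ≤ n − 1`, the number of
`F[X]`-submodules of `𝓘` of `F`-dimension `d` is at most `n^{d/μ(n)}`. -/
theorem stmt11 {F : Type*} [Field F] [Fintype F]
    (q : ℕ) (hq : q = Fintype.card F)
    (n : ℕ) (hn : 0 < n) (hnq : Nat.gcd n q = 1)
    (d : ℕ) (hd1 : mun F n ≤ d) (hd2 : d ≤ n - 1) :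
    (Nat.card {CC : Submodule (Polynomial F) (QA F n 1) //
        (CC : Set (QA F n 1)) ⊆ (Jcyc F n : Set (QA F n 1)) ∧
        Module.finrank F CC = d} : ℝ)
      ≤ (n : ℝ) ^ ((d : ℝ) / (mun F n : ℝ)) :=
  stmt11_general q hq n hn hnq d
end

section
/- The assignment Σ_{j=0}^{αn−1} ā_j X^j ↦ Σ_{j=0}^{αn−1} a_j π^{ℓ−1} X^j (where a_j ∈ R is any lift of ā_j ∈ F) gives a well-defined injective map η_α : F[X]/⟨X^{αn} − λ̄⟩ → R[X]/⟨X^{αn} − λ⟩ that is additive, satisfies η_α(ḡ·f) = g·η_α(f) for every g ∈ R[X] (where ḡ ∈ F[X] is the coefficientwise reduction of g modulo Rπ), and preserves Hamming weight: the degree-< αn coefficient vector of η_α(f) has exactly as many nonzero entries as that of f. Equivalently, the kernel of the map F[X] → R[X]/⟨X^{αn} − λ⟩ sending Σ ā_j X^j to the class of Σ a_j π^{ℓ−1} X^j is exactly the ideal ⟨X^{αn} − λ̄⟩ of F[X]. -/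
open Polynomial

/-- The canonical representative (of degree `< deg g` when `g` is monic) of a class in
`R[X]/⟨g⟩`. -/
noncomputable def polyRep {R : Type*} [CommRing R] (g : Polynomial R)
    (c : Polynomial R ⧸ Ideal.span {g}) : Polynomial R :=
  Function.surjInv Ideal.Quotient.mk_surjective c %ₘ g

/-- The Hamming weight of a class in `R[X]/⟨g⟩`: the number of nonzero coefficients of its
canonical representative of degree `< deg g` (`g` monic). -/
noncomputable def qwt {R : Type*} [CommRing R] (g : Polynomial R)
    (c : Polynomial R ⧸ Ideal.span {g}) : ℕ :=
  (polyRep g c).support.card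

/-!
In a chain ring everything outside `Rπ` is a unit, so the annihilator of `π^{ℓ-1}` is exactly
`Rπ` and multiplication by `π^{ℓ-1}` identifies `F = R/Rπ` with `π^{ℓ-1} R` coefficientwise.
Since `X^{αn} - λ` is monic, division by it commutes both with this scaling and with reduction
modulo `π`; hence `π^{ℓ-1} g` is divisible by `X^{αn} - λ` iff `ḡ` is divisible by `X^{αn} - λ̄`,
and the canonical representatives of `ḡ` and of `π^{ℓ-1} g` have the same support.
-/

theorem pow_pred_mul_eq_zero_iff_mem_span {R : Type*} [CommRing R]
    (hchain : ∀ I J : Ideal R, I ≤ J ∨ J ≤ I) {π : R} (hmax : (Ideal.span {π}).IsMaximal)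
    {ℓ : ℕ} (hπℓ : π ^ ℓ = 0) (hπℓ1 : π ^ (ℓ - 1) ≠ 0) (a : R) :
    π ^ (ℓ - 1) * a = 0 ↔ a ∈ Ideal.span {π} := by
  constructor
  · intro h
    by_contra ha
    have hunit : IsUnit a := by
      rw [← Ideal.span_singleton_eq_top]
      rcases hchain (Ideal.span {a}) (Ideal.span {π}) with hle | hle
      · exact absurd (hle (Ideal.mem_span_singleton_self a)) ha
      · by_contra hne
        exact ha (hmax.eq_of_le hne hle ▸ Ideal.mem_span_singleton_self a)
    exact hπℓ1 (hunit.mul_left_eq_zero.mp h)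
  · intro h
    obtain ⟨b, rfl⟩ := Ideal.mem_span_singleton.mp h
    have hℓ : ℓ ≠ 0 := by
      rintro rfl
      exact hπℓ1 hπℓ
    rw [← mul_assoc, ← pow_succ, Nat.sub_add_cancel (Nat.one_le_iff_ne_zero.mpr hℓ), hπℓ,
      zero_mul]

theorem polyRep_mk {R : Type*} [CommRing R] {f : R[X]} (hf : f.Monic) (q : R[X]) :
    polyRep f (Ideal.Quotient.mk _ q) = q %ₘ f :=
  modByMonic_eq_of_dvd_sub hf <| Ideal.mem_span_singleton.mp <| Ideal.Quotient.eq.mp <|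
    Function.surjInv_eq Ideal.Quotient.mk_surjective _

section MulLift

variable {R S : Type*} [CommRing R] [CommRing S] {φ : R →+* S} {c : R}

theorem support_smul_eq_support_map (hc : ∀ a, c * a = 0 ↔ φ a = 0) (p : R[X]) :
    (c • p).support = (p.map φ).support := by
  ext j
  simp only [mem_support_iff, coeff_smul, smul_eq_mul, coeff_map, ne_eq, hc]

theorem smul_eq_zero_iff_map_eq_zero (hc : ∀ a, c * a = 0 ↔ φ a = 0) (p : R[X]) :
    c • p = 0 ↔ p.map φ = 0 := by
  rw [← support_eq_empty, support_smul_eq_support_map hc, support_eq_empty]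

theorem mk_C_mul_eq_zero_iff {f : R[X]} (hf : f.Monic) (hc : ∀ a, c * a = 0 ↔ φ a = 0)
    (g : R[X]) :
    Ideal.Quotient.mk (Ideal.span {f}) (C c * g) = 0 ↔ g.map φ ∈ Ideal.span {f.map φ} := by
  rw [Ideal.Quotient.eq_zero_iff_mem, Ideal.mem_span_singleton, Ideal.mem_span_singleton,
    ← modByMonic_eq_zero_iff_dvd hf, ← modByMonic_eq_zero_iff_dvd (hf.map φ), ← smul_eq_C_mul,
    smul_modByMonic, smul_eq_zero_iff_map_eq_zero hc, map_modByMonic _ hf]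

theorem mk_C_mul_eq_mk_C_mul_iff {f : R[X]} (hf : f.Monic) (hc : ∀ a, c * a = 0 ↔ φ a = 0)
    (g g' : R[X]) :
    Ideal.Quotient.mk (Ideal.span {f}) (C c * g) = Ideal.Quotient.mk _ (C c * g') ↔
      Ideal.Quotient.mk (Ideal.span {f.map φ}) (g.map φ) = Ideal.Quotient.mk _ (g'.map φ) := by
  rw [← sub_eq_zero, ← map_sub, ← mul_sub, mk_C_mul_eq_zero_iff hf hc, Ideal.Quotient.eq,
    Polynomial.map_sub]

theorem exists_mk_map_eq (hφ : Function.Surjective φ) (f : R[X])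
    (x : S[X] ⧸ Ideal.span {f.map φ}) : ∃ g : R[X], Ideal.Quotient.mk _ (g.map φ) = x := by
  obtain ⟨p, rfl⟩ := Ideal.Quotient.mk_surjective x
  obtain ⟨g, rfl⟩ := map_surjective φ hφ p
  exact ⟨g, rfl⟩

/-- The paper's `η_α`: `ḡ ↦ c g` for an arbitrary lift `g` of `ḡ`. -/
noncomputable def mulLift (hφ : Function.Surjective φ) (f : R[X]) (c : R)
    (x : S[X] ⧸ Ideal.span {f.map φ}) : R[X] ⧸ Ideal.span {f} :=
  Ideal.Quotient.mk _ (C c * (exists_mk_map_eq hφ f x).choose)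

variable (hφ : Function.Surjective φ) {f : R[X]} (hf : f.Monic) (hc : ∀ a, c * a = 0 ↔ φ a = 0)
include hφ hf hc

theorem mulLift_mk_map (g : R[X]) :
    mulLift hφ f c (Ideal.Quotient.mk _ (g.map φ)) = Ideal.Quotient.mk _ (C c * g) :=
  (mk_C_mul_eq_mk_C_mul_iff hf hc _ _).mpr (exists_mk_map_eq hφ f _).choose_spec

theorem mulLift_injective : Function.Injective (mulLift hφ f c) := by
  intro x y hxy
  obtain ⟨g, rfl⟩ := exists_mk_map_eq hφ f x
  obtain ⟨g', rfl⟩ := exists_mk_map_eq hφ f y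
  rwa [mulLift_mk_map hφ hf hc, mulLift_mk_map hφ hf hc, mk_C_mul_eq_mk_C_mul_iff hf hc] at hxy

theorem mulLift_add (x y : S[X] ⧸ Ideal.span {f.map φ}) :
    mulLift hφ f c (x + y) = mulLift hφ f c x + mulLift hφ f c y := by
  obtain ⟨g, rfl⟩ := exists_mk_map_eq hφ f x
  obtain ⟨g', rfl⟩ := exists_mk_map_eq hφ f y
  rw [← map_add, ← Polynomial.map_add]
  simp only [mulLift_mk_map hφ hf hc, mul_add, map_add]

theorem mulLift_mk_map_mul (g : R[X]) (x : S[X] ⧸ Ideal.span {f.map φ}) :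
    mulLift hφ f c (Ideal.Quotient.mk _ (g.map φ) * x) =
      Ideal.Quotient.mk _ g * mulLift hφ f c x := by
  obtain ⟨g', rfl⟩ := exists_mk_map_eq hφ f x
  rw [← map_mul, ← Polynomial.map_mul, mulLift_mk_map hφ hf hc, mulLift_mk_map hφ hf hc,
    ← map_mul, mul_left_comm]

theorem qwt_mulLift (x : S[X] ⧸ Ideal.span {f.map φ}) :
    qwt (f.map φ) x = qwt f (mulLift hφ f c x) := by
  obtain ⟨g, rfl⟩ := exists_mk_map_eq hφ f x
  rw [qwt, qwt, mulLift_mk_map hφ hf hc, polyRep_mk (hf.map φ), polyRep_mk hf, ← smul_eq_C_mul,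
    smul_modByMonic, ← map_modByMonic _ hf, support_smul_eq_support_map hc]

end MulLift

theorem stmt16_general {R : Type*} [CommRing R]
    (hchain : ∀ I J : Ideal R, I ≤ J ∨ J ≤ I)
    (π : R) (hmax : (Ideal.span {π}).IsMaximal)
    (ℓ : ℕ) (hπℓ : π ^ ℓ = 0) (hπℓ1 : π ^ (ℓ - 1) ≠ 0)
    (lam : R)
    (n α : ℕ) (hn : 0 < n) (hα : 0 < α) :
    (∃ η : (Polynomial (R ⧸ Ideal.span {π}) ⧸
            Ideal.span {(X : Polynomial (R ⧸ Ideal.span {π})) ^ (α * n)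
              - C (Ideal.Quotient.mk (Ideal.span {π}) lam)}) →
          (Polynomial R ⧸ Ideal.span {(X : Polynomial R) ^ (α * n) - C lam}),
      (∀ g : Polynomial R,
        η (Ideal.Quotient.mk _ (g.map (Ideal.Quotient.mk (Ideal.span {π})))) =
          Ideal.Quotient.mk _ (C (π ^ (ℓ - 1)) * g)) ∧
      Function.Injective η ∧
      (∀ x y, η (x + y) = η x + η y) ∧
      (∀ (g : Polynomial R) (x : Polynomial (R ⧸ Ideal.span {π}) ⧸
            Ideal.span {(X : Polynomial (R ⧸ Ideal.span {π})) ^ (α * n)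
              - C (Ideal.Quotient.mk (Ideal.span {π}) lam)}),
        η (Ideal.Quotient.mk _ (g.map (Ideal.Quotient.mk (Ideal.span {π}))) * x) =
          Ideal.Quotient.mk _ g * η x) ∧
      (∀ x, qwt ((X : Polynomial (R ⧸ Ideal.span {π})) ^ (α * n)
              - C (Ideal.Quotient.mk (Ideal.span {π}) lam)) x =
            qwt ((X : Polynomial R) ^ (α * n) - C lam) (η x))) ∧
    (∀ g : Polynomial R,
      Ideal.Quotient.mk (Ideal.span {(X : Polynomial R) ^ (α * n) - C lam})
          (C (π ^ (ℓ - 1)) * g) = 0 ↔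
        g.map (Ideal.Quotient.mk (Ideal.span {π})) ∈
          Ideal.span {(X : Polynomial (R ⧸ Ideal.span {π})) ^ (α * n)
            - C (Ideal.Quotient.mk (Ideal.span {π}) lam)}) := by
  have hf : ((X : R[X]) ^ (α * n) - C lam).Monic := monic_X_pow_sub_C _ (by positivity)
  have hmap : ((X : R[X]) ^ (α * n) - C lam).map (Ideal.Quotient.mk (Ideal.span {π})) =
      X ^ (α * n) - C (Ideal.Quotient.mk _ lam) := by
    simp
  have hc (a : R) : π ^ (ℓ - 1) * a = 0 ↔ Ideal.Quotient.mk (Ideal.span {π}) a = 0 := by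
    rw [Ideal.Quotient.eq_zero_iff_mem, pow_pred_mul_eq_zero_iff_mem_span hchain hmax hπℓ hπℓ1]
  have hφ := Ideal.Quotient.mk_surjective (I := Ideal.span {π})
  rw [← hmap]
  exact ⟨⟨mulLift hφ _ _, mulLift_mk_map hφ hf hc, mulLift_injective hφ hf hc,
    mulLift_add hφ hf hc, mulLift_mk_map_mul hφ hf hc, qwt_mulLift hφ hf hc⟩,
    mk_C_mul_eq_zero_iff hf hc⟩

/-- The assignment `Σ ā_j X^j ↦ Σ a_j π^{ℓ−1} X^j` (where `a_j ∈ R` is any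
lift of `ā_j ∈ F`) gives a well-defined injective map
`η_α : F[X]/⟨X^{αn} − λ̄⟩ → R[X]/⟨X^{αn} − λ⟩` that is additive, satisfies
`η_α(ḡ·f) = g·η_α(f)` for every `g ∈ R[X]`, and preserves Hamming weight.  Equivalently,
the kernel of the map `F[X] → R[X]/⟨X^{αn} − λ⟩` sending `Σ ā_j X^j` to the class of
`Σ a_j π^{ℓ−1} X^j` is exactly the ideal `⟨X^{αn} − λ̄⟩` of `F[X]`. -/
theorem stmt16 {R : Type*} [CommRing R] [Finite R]
    (hchain : ∀ I J : Ideal R, I ≤ J ∨ J ≤ I)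
    (π : R) (hmax : (Ideal.span {π}).IsMaximal)
    (ℓ : ℕ) (hℓ : 0 < ℓ) (hπℓ : π ^ ℓ = 0) (hπℓ1 : π ^ (ℓ - 1) ≠ 0)
    (lam : R) (hlam : IsUnit lam)
    (n α : ℕ) (hn : 0 < n) (hα : 0 < α) :
    (∃ η : (Polynomial (R ⧸ Ideal.span {π}) ⧸
            Ideal.span {(X : Polynomial (R ⧸ Ideal.span {π})) ^ (α * n)
              - C (Ideal.Quotient.mk (Ideal.span {π}) lam)}) →
          (Polynomial R ⧸ Ideal.span {(X : Polynomial R) ^ (α * n) - C lam}),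
      (∀ g : Polynomial R,
        η (Ideal.Quotient.mk _ (g.map (Ideal.Quotient.mk (Ideal.span {π})))) =
          Ideal.Quotient.mk _ (C (π ^ (ℓ - 1)) * g)) ∧
      Function.Injective η ∧
      (∀ x y, η (x + y) = η x + η y) ∧
      (∀ (g : Polynomial R) (x : Polynomial (R ⧸ Ideal.span {π}) ⧸
            Ideal.span {(X : Polynomial (R ⧸ Ideal.span {π})) ^ (α * n)
              - C (Ideal.Quotient.mk (Ideal.span {π}) lam)}),
        η (Ideal.Quotient.mk _ (g.map (Ideal.Quotient.mk (Ideal.span {π}))) * x) =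
          Ideal.Quotient.mk _ g * η x) ∧
      (∀ x, qwt ((X : Polynomial (R ⧸ Ideal.span {π})) ^ (α * n)
              - C (Ideal.Quotient.mk (Ideal.span {π}) lam)) x =
            qwt ((X : Polynomial R) ^ (α * n) - C lam) (η x))) ∧
    (∀ g : Polynomial R,
      Ideal.Quotient.mk (Ideal.span {(X : Polynomial R) ^ (α * n) - C lam})
          (C (π ^ (ℓ - 1)) * g) = 0 ↔
        g.map (Ideal.Quotient.mk (Ideal.span {π})) ∈
          Ideal.span {(X : Polynomial (R ⧸ Ideal.span {π})) ^ (α * n)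
            - C (Ideal.Quotient.mk (Ideal.span {π}) lam)}) :=
  stmt16_general hchain π hmax ℓ hπℓ hπℓ1 lam n α hn hα
end

section
/- A finite commutative ring R with 1 ≠ 0 is a chain ring — that is, its ideals are totally ordered by inclusion — if and only if there exists a nilpotent element π ∈ R such that the quotient R/Rπ is a field. -/
/-!
If the ideals of a finite ring `R` form a chain, two maximal ideals are comparable, so `R` is
local, and the largest principal ideal inside the maximal ideal `𝔪` is all of `𝔪`; hence
`𝔪 = Rπ`, `R/Rπ` is a field, and `π` is nilpotent because `R` is artinian.

Conversely, if `π` is nilpotent then it lies in every maximal ideal, so `Rπ` is the only one.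
Given an ideal `I`, let `k` be largest with `I ⊆ Rπᵏ` (it exists since `πⁿ = 0`). An element
`x = aπᵏ ∈ I` outside `Rπᵏ⁺¹` has `a ∉ Rπ`, so `a` is a unit and `I = Rπᵏ`. Thus the ideals are
the chain `R ⊇ Rπ ⊇ Rπ² ⊇ ⋯`.
-/

open IsLocalRing

namespace Ideal

variable {R : Type*} [CommRing R]

theorem isLocalRing_of_totally_ordered [Nontrivial R] (h : ∀ I J : Ideal R, I ≤ J ∨ J ≤ I) :
    IsLocalRing R := by
  obtain ⟨m, hm⟩ := exists_maximal R
  refine .of_unique_max_ideal ⟨m, hm, fun J hJ => ?_⟩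
  rcases h J m with hle | hle
  · exact hJ.eq_of_le hm.ne_top hle
  · exact (hm.eq_of_le hJ.ne_top hle).symm

theorem isPrincipalIdealRing_of_totally_ordered [IsNoetherianRing R]
    (h : ∀ I J : Ideal R, I ≤ J ∨ J ≤ I) : IsPrincipalIdealRing R := by
  refine ⟨fun I => ?_⟩
  obtain ⟨_, ⟨π, hπI, rfl⟩, hmax⟩ := WellFoundedGT.exists_maximal inferInstance
    ((fun x => span {x}) '' (I : Set R)) ⟨_, 0, I.zero_mem, rfl⟩
  refine ⟨π, le_antisymm (fun x hx => ?_) (span_le.mpr (Set.singleton_subset_iff.mpr hπI))⟩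
  rcases h (span {x}) (span {π}) with hle | hle
  · exact hle (mem_span_singleton_self x)
  · exact hmax ⟨x, hx, rfl⟩ hle (mem_span_singleton_self x)

section NilpotentGenerator

variable {π : R} (hπ : IsNilpotent π) (hmax : (span {π}).IsMaximal)
include hπ hmax

theorem le_span_singleton_of_isNilpotent {I : Ideal R} (hI : I ≠ ⊤) : I ≤ span {π} := by
  obtain ⟨J, hJ, hIJ⟩ := I.exists_le_maximal hI
  have hπJ : π ∈ J := nilradical_le_prime J (mem_nilradical.mpr hπ)
  rwa [hmax.eq_of_le hJ.ne_top (span_singleton_le_iff_mem J |>.mpr hπJ)]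

theorem eq_span_pow_of_le_of_not_le {I : Ideal R} {k : ℕ} (hle : I ≤ span {π ^ k})
    (hnle : ¬ I ≤ span {π ^ (k + 1)}) : I = span {π ^ k} := by
  obtain ⟨x, hxI, hx⟩ := SetLike.not_le_iff_exists.mp hnle
  obtain ⟨a, rfl⟩ := mem_span_singleton'.mp (hle hxI)
  have ha : IsUnit a := by
    by_contra ha
    have hπa : π ∣ a := mem_span_singleton.mp <|
      le_span_singleton_of_isNilpotent hπ hmax (span_singleton_eq_top.not.mpr ha)
        (mem_span_singleton_self a)
    exact hx (mem_span_singleton.mpr (pow_succ' π k ▸ mul_dvd_mul hπa dvd_rfl))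
  refine le_antisymm hle (span_le.mpr (Set.singleton_subset_iff.mpr ?_))
  have hπk : (↑ha.unit⁻¹ : R) * (a * π ^ k) = π ^ k := by
    rw [← mul_assoc, IsUnit.val_inv_mul, one_mul]
  exact hπk ▸ I.mul_mem_left _ hxI

theorem exists_eq_span_pow_or_le (I : Ideal R) (k : ℕ) :
    (∃ j, I = span {π ^ j}) ∨ I ≤ span {π ^ k} := by
  induction k with
  | zero => simp
  | succ k ih =>
    rcases ih with hj | hle
    · exact .inl hj
    · by_cases hnle : I ≤ span {π ^ (k + 1)}
      · exact .inr hnle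
      · exact .inl ⟨k, eq_span_pow_of_le_of_not_le hπ hmax hle hnle⟩

theorem exists_eq_span_pow (I : Ideal R) : ∃ j, I = span {π ^ j} := by
  rcases exists_eq_span_pow_or_le hπ hmax I hπ.choose with hj | hle
  · exact hj
  · refine ⟨hπ.choose, ?_⟩
    rw [hπ.choose_spec, span_singleton_eq_bot.mpr rfl] at hle ⊢
    exact le_bot_iff.mp hle

theorem totally_ordered_of_isNilpotent (I J : Ideal R) : I ≤ J ∨ J ≤ I := by
  obtain ⟨i, rfl⟩ := exists_eq_span_pow hπ hmax I
  obtain ⟨j, rfl⟩ := exists_eq_span_pow hπ hmax J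
  simp only [span_singleton_le_span_singleton]
  exact (le_total j i).imp (pow_dvd_pow π) (pow_dvd_pow π)

end NilpotentGenerator

end Ideal

open Ideal in
/-- A finite commutative ring `R` with `1 ≠ 0` is a chain ring — that is,
its ideals are totally ordered by inclusion — if and only if there exists a nilpotent element
`π ∈ R` such that the quotient `R/Rπ` is a field. -/
theorem stmt19 {R : Type*} [CommRing R] [Finite R] [Nontrivial R] :
    (∀ I J : Ideal R, I ≤ J ∨ J ≤ I) ↔
      ∃ π : R, IsNilpotent π ∧ IsField (R ⧸ Ideal.span {π}) := by
  constructor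
  · intro h
    have := isLocalRing_of_totally_ordered h
    have := isPrincipalIdealRing_of_totally_ordered h
    obtain ⟨π, hspan⟩ : ∃ π : R, span {π} = maximalIdeal R :=
      ⟨_, Submodule.IsPrincipal.span_singleton_generator _⟩
    refine ⟨π, ?_, ?_⟩
    · exact Ring.KrullDimLE.isNilpotent_iff_mem_maximalIdeal.mpr
        (hspan ▸ mem_span_singleton_self _)
    · rw [hspan]
      exact (Quotient.maximal_ideal_iff_isField_quotient _).mp (maximalIdeal.isMaximal R)
  · rintro ⟨π, hπ, hfield⟩
    exact totally_ordered_of_isNilpotent hπ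
      ((Quotient.maximal_ideal_iff_isField_quotient _).mpr hfield)
end
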